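/- Let s ∈ ℂ with Re(s) = a > 0. Let Ω ⊆ ℝ³ be a measurable set, let ρ : Ω → ℝ be measurable with ρ(x) > 0 for all x, and for η = 1,2,3 let d_η : ℝ → ℝ be measurable with d_η ≥ 0; set S_η(x) = 1 + d_η(x_η)/s. Let g : Ω → ℂ³ be measurable such that for each η the function x ↦ (1/ρ(x)) |g_η(x)/S_η(x)|² is integrable on Ω. Then for each η the function x ↦ Re( conj(s)/(ρ(x) S_η(x)²) ) |g_η(x)|² is integrable, and 2 Σ_{η=1}^{3} ∫_Ω Re( conj(s)/(ρ(x) S_η(x)²) ) |g_η(x)|² dx ≥ a Σ_{η=1}^{3} ∫_Ω (1/ρ(x)) |g_η(x)/S_η(x)|² dx. -/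

import Mathlib

/-!
With `S = 1 + d/s = (s + d)/s` one computes
`Re(conj s / S²) · |S|² = Re(s · conj(s + d)²) / |s + d|² = Re s + 2 d (Im s)² / |s + d|²`,
which is at least `Re s = a` when `d ≥ 0`. Hence, pointwise,
`a · (1/ρ)|g_η/S_η|² ≤ Re(conj s/(ρ S_η²)) |g_η|²`, and the right-hand side is dominated by
`|s| · (1/ρ)|g_η/S_η|²`, which gives its integrability. Integrating and summing over `η`
yields the bound even without the factor `2`, which only enlarges the nonnegative right-hand side.
-/

open MeasureTheory ComplexConjugate

namespace Complex

theorem re_conj_div_div_sq_mul_norm_sq (s w : ℂ) :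
    (conj s / (w / s) ^ 2).re * ‖w / s‖ ^ 2 = (s * conj w ^ 2).re / normSq w := by
  rcases eq_or_ne s 0 with rfl | hs
  · simp
  rcases eq_or_ne w 0 with rfl | hw
  · simp
  have hs' : conj s ≠ 0 := (map_ne_zero _).2 hs
  have hw' : conj w ≠ 0 := (map_ne_zero _).2 hw
  rw [Complex.sq_norm, ← re_mul_ofReal, ← div_ofReal_re, map_div₀, ofReal_div, ← mul_conj, ← mul_conj]
  congr 1
  field_simp

theorem re_mul_conj_add_ofReal_sq (s : ℂ) (d : ℝ) :
    (s * conj (s + d) ^ 2).re = s.re * normSq (s + d) + 2 * d * s.im ^ 2 := by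
  simp only [normSq_apply, pow_two, mul_re, mul_im, map_add, conj_ofReal, add_re, add_im,
    conj_re, conj_im, ofReal_re, ofReal_im]
  ring

theorem re_div_ofReal_mul (z S : ℂ) (r : ℝ) : (z / (r * S ^ 2)).re = r⁻¹ * (z / S ^ 2).re := by
  rw [mul_comm, ← div_div, div_ofReal_re, div_eq_inv_mul]

theorem abs_re_div_ofReal_mul_sq_mul_norm_sq_le (z S G : ℂ) {r : ℝ} (hr : 0 ≤ r) :
    |(z / (r * S ^ 2)).re * ‖G‖ ^ 2| ≤ ‖z‖ * (1 / r * ‖G / S‖ ^ 2) := by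
  calc |(z / (r * S ^ 2)).re * ‖G‖ ^ 2| ≤ ‖z / (r * S ^ 2)‖ * ‖G‖ ^ 2 := by
        rw [abs_mul, abs_pow, abs_norm]
        gcongr
        exact abs_re_le_norm _
    _ = ‖z‖ * (1 / r * ‖G / S‖ ^ 2) := by
        rw [norm_div, norm_mul, norm_pow, norm_div, norm_real, Real.norm_of_nonneg hr]
        ring

end Complex

noncomputable def pmlStretch (s : ℂ) (d : ℝ) : ℂ := 1 + d / s

theorem pmlStretch_eq_div {s : ℂ} (hs : s ≠ 0) (d : ℝ) : pmlStretch s d = (s + d) / s := by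
  rw [pmlStretch, add_div, div_self hs]

theorem re_le_re_conj_div_pmlStretch_sq_mul_norm_sq (s : ℂ) {d : ℝ} (hd : 0 ≤ d) :
    s.re ≤ (conj s / pmlStretch s d ^ 2).re * ‖pmlStretch s d‖ ^ 2 := by
  rcases eq_or_ne s 0 with rfl | hs
  · simp
  rw [pmlStretch_eq_div hs, Complex.re_conj_div_div_sq_mul_norm_sq,
    Complex.re_mul_conj_add_ofReal_sq]
  rcases (Complex.normSq_nonneg (s + d)).eq_or_lt with hw | hw
  · -- `s + d = 0` forces `Re s = -d ≤ 0`, and the right-hand side is `0` by `x / 0 = 0`.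
    have : s.re + d = 0 := by simpa using congrArg Complex.re (Complex.normSq_eq_zero.1 hw.symm)
    rw [← hw, div_zero]
    linarith
  · rw [le_div_iff₀ hw]
    exact le_add_of_nonneg_right (by positivity)

theorem re_mul_inv_mul_norm_div_pmlStretch_sq_le (s : ℂ) {d r : ℝ} (hd : 0 ≤ d) (hr : 0 ≤ r)
    (G : ℂ) :
    s.re * (1 / r * ‖G / pmlStretch s d‖ ^ 2) ≤
      (conj s / (r * pmlStretch s d ^ 2)).re * ‖G‖ ^ 2 := by
  have key := re_le_re_conj_div_pmlStretch_sq_mul_norm_sq s hd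
  set S := pmlStretch s d
  rcases eq_or_ne S 0 with hS | hS
  · simp [hS]
  rw [Complex.re_div_ofReal_mul, norm_div, div_pow]
  calc s.re * (1 / r * (‖G‖ ^ 2 / ‖S‖ ^ 2)) = s.re * (r⁻¹ * ‖G‖ ^ 2 / ‖S‖ ^ 2) := by ring
    _ ≤ (conj s / S ^ 2).re * ‖S‖ ^ 2 * (r⁻¹ * ‖G‖ ^ 2 / ‖S‖ ^ 2) := by gcongr
    _ = r⁻¹ * (conj s / S ^ 2).re * ‖G‖ ^ 2 := by field_simp

theorem integrableOn_and_re_mul_setIntegral_le {X : Type*} [MeasurableSpace X] {μ : Measure X}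
    {Ω : Set X} (hΩ : MeasurableSet Ω) (s : ℂ) {ρ δ : X → ℝ} {G : X → ℂ} (hρm : Measurable ρ)
    (hδm : Measurable δ) (hGm : Measurable G) (hρ : ∀ x ∈ Ω, 0 < ρ x) (hδ : ∀ x ∈ Ω, 0 ≤ δ x)
    (hint : IntegrableOn (fun x => 1 / ρ x * ‖G x / pmlStretch s (δ x)‖ ^ 2) Ω μ) :
    IntegrableOn (fun x => (conj s / (ρ x * pmlStretch s (δ x) ^ 2)).re * ‖G x‖ ^ 2) Ω μ ∧
      s.re * ∫ x in Ω, 1 / ρ x * ‖G x / pmlStretch s (δ x)‖ ^ 2 ∂μ ≤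
        ∫ x in Ω, (conj s / (ρ x * pmlStretch s (δ x) ^ 2)).re * ‖G x‖ ^ 2 ∂μ := by
  have hmeas : Measurable fun x => (conj s / (ρ x * pmlStretch s (δ x) ^ 2)).re * ‖G x‖ ^ 2 := by
    unfold pmlStretch
    fun_prop
  have hintY : IntegrableOn
      (fun x => (conj s / (ρ x * pmlStretch s (δ x) ^ 2)).re * ‖G x‖ ^ 2) Ω μ :=
    (hint.const_mul ‖conj s‖).mono' hmeas.aestronglyMeasurable <|
      ae_restrict_of_forall_mem hΩ fun x hx => (Real.norm_eq_abs _).trans_le <|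
        Complex.abs_re_div_ofReal_mul_sq_mul_norm_sq_le _ _ _ (hρ x hx).le
  refine ⟨hintY, ?_⟩
  rw [← integral_const_mul]
  exact setIntegral_mono_on (hint.const_mul _) hintY hΩ fun x hx =>
    re_mul_inv_mul_norm_div_pmlStretch_sq_le s (hδ x hx) (hρ x hx).le _

/-- coercivity of the symmetrized PML sesquilinear form, Lemma 2:
for `Re s = a > 0`, PML stretching factors `S_η(x) = 1 + d_η(x_η)/s` with `d_η ≥ 0`,
a positive density `ρ`, and a vector field `g` with `(1/ρ)|g_η/S_η|²` integrable on `Ω`,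
each `Re(conj(s)/(ρ S_η²))|g_η|²` is integrable on `Ω` and
`2 Σ_η ∫_Ω Re(conj(s)/(ρ S_η²))|g_η|² ≥ a Σ_η ∫_Ω (1/ρ)|g_η/S_η|²`. -/
theorem pml_sesquilinear_coercivity (s : ℂ) (a : ℝ) (hsa : s.re = a) (ha : 0 < a)
    (Ω : Set (Fin 3 → ℝ)) (hΩ : MeasurableSet Ω)
    (ρ : (Fin 3 → ℝ) → ℝ) (hρm : Measurable ρ) (hρ : ∀ x ∈ Ω, 0 < ρ x)
    (d : Fin 3 → ℝ → ℝ) (hdm : ∀ η, Measurable (d η)) (hd : ∀ η t, 0 ≤ d η t)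
    (g : (Fin 3 → ℝ) → Fin 3 → ℂ) (hgm : Measurable g)
    (S : (Fin 3 → ℝ) → Fin 3 → ℂ) (hS : ∀ x η, S x η = 1 + (d η (x η) : ℂ) / s)
    (hint : ∀ η, IntegrableOn
      (fun x => (1 / ρ x) * ‖g x η / S x η‖ ^ 2) Ω) :
    (∀ η, IntegrableOn
      (fun x => ((starRingEnd ℂ) s / ((ρ x : ℂ) * (S x η) ^ 2)).re *
        ‖g x η‖ ^ 2) Ω) ∧
    a * ∑ η : Fin 3, ∫ x in Ω, (1 / ρ x) * ‖g x η / S x η‖ ^ 2 ≤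
      2 * ∑ η : Fin 3, ∫ x in Ω,
        ((starRingEnd ℂ) s / ((ρ x : ℂ) * (S x η) ^ 2)).re *
          ‖g x η‖ ^ 2 := by
  obtain rfl : S = fun x η => pmlStretch s (d η (x η)) := funext₂ hS
  subst hsa
  beta_reduce at hint ⊢
  have hcomp (η : Fin 3) := integrableOn_and_re_mul_setIntegral_le hΩ s hρm
    ((hdm η).comp (measurable_pi_apply η)) ((measurable_pi_apply η).comp hgm) hρ
    (fun x _ => hd η (x η)) (hint η)
  have hnonneg : 0 ≤ ∑ η : Fin 3, ∫ x in Ω, 1 / ρ x * ‖g x η / pmlStretch s (d η (x η))‖ ^ 2 :=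
    Finset.sum_nonneg fun η _ => setIntegral_nonneg hΩ fun x hx => by
      have := hρ x hx
      positivity
  have hsum : s.re * ∑ η : Fin 3, ∫ x in Ω, 1 / ρ x * ‖g x η / pmlStretch s (d η (x η))‖ ^ 2 ≤
      ∑ η : Fin 3, ∫ x in Ω,
        (conj s / ((ρ x : ℂ) * pmlStretch s (d η (x η)) ^ 2)).re * ‖g x η‖ ^ 2 := by
    rw [Finset.mul_sum]
    exact Finset.sum_le_sum fun η _ => (hcomp η).2
  exact ⟨fun η => (hcomp η).1, hsum.trans <|
    le_mul_of_one_le_left ((mul_nonneg ha.le hnonneg).trans hsum) one_le_two⟩
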